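/- arXiv:1904.02976 — 2 statements merged into one kernel-verified Lean document; each statement's English description precedes it below -/
import Mathlib

section
/- Let U, V, W be subspaces of a projective space over a field, of projective dimensions a, a', a'' respectively with a ≥ max{a', a'', 0}, such that V ≠ U ∩ V = U ∩ W ≠ W. Let p be a point not in U ∪ V ∪ W lying in the span of U with some point (so that all lines pq for q ∈ U make sense within one ambient projective space). If for every point q ∈ U \ V the line pq meets V ∪ W, then dim(U ∩ V) = a − 1. -/
/-!
If `q ∈ U \ V`, the line `pq` meets `V ∪ W` in a point `x ≠ p`, and exchanging `x` for `p`
puts `q` in `V + ⟨p⟩` or in `W + ⟨p⟩`. A subspace is never the union of two proper subspaces,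
so `U` lies in one of these, and then `U ∩ V`, resp. `U ∩ W`, has codimension at most one in `U`.
Both intersections are the same proper subspace of `U`.
-/

open Module Submodule

namespace Submodule

variable {K V : Type*} [Field K] [AddCommGroup V] [Module K V]

theorem mem_sup_span_singleton_exchange {X : Submodule K V} {x y : V}
    (hx : x ∈ X ⊔ K ∙ y) (hxX : x ∉ X) : y ∈ X ⊔ K ∙ x := by
  have hspan : ∀ z, X ⊔ K ∙ z = span K (insert z (X : Set V)) := fun z => by
    rw [span_insert, span_eq, sup_comm]
  rw [hspan] at hx ⊢
  exact mem_span_insert_exchange hx (by rwa [span_eq])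

theorem mem_sup_span_singleton_of_mem_span_pair {X : Submodule K V} {p q x : V}
    (hx0 : x ≠ 0) (hx : x ∈ span K {p, q}) (hxX : x ∈ X) (hpX : p ∉ X) :
    q ∈ X ⊔ K ∙ p := by
  have hxp : x ∉ K ∙ p := fun hxp =>
    hx0 <| disjoint_def.1 (disjoint_span_singleton_of_notMem hpX) x hxX hxp
  rw [span_insert] at hx
  have hq : q ∈ K ∙ p ⊔ K ∙ x := mem_sup_span_singleton_exchange hx hxp
  exact sup_le le_sup_right ((span_singleton_le_iff_mem x _).2 (mem_sup_left hxX)) hq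

theorem finrank_le_finrank_inf_add_one {U X : Submodule K V} [FiniteDimensional K U] {p : V}
    (hU : U ≤ X ⊔ K ∙ p) : finrank K U ≤ finrank K ↥(U ⊓ X) + 1 := by
  by_cases hUX : U ≤ X
  · rw [inf_eq_left.2 hUX]
    omega
  obtain ⟨u, huU, huX⟩ := SetLike.not_le_iff_exists.1 hUX
  have hp : p ∈ X ⊔ K ∙ u := mem_sup_span_singleton_exchange (hU huU) huX
  have hUle : U ≤ K ∙ u ⊔ U ⊓ X := by
    rw [inf_comm, ← sup_inf_assoc_of_le _ ((span_singleton_le_iff_mem u U).2 huU)]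
    refine le_inf (hU.trans (sup_le le_sup_right ?_)) le_rfl
    exact (span_singleton_le_iff_mem p _).2 (by rwa [sup_comm])
  calc finrank K U ≤ finrank K ↥(K ∙ u ⊔ U ⊓ X) := finrank_mono hUle
    _ ≤ finrank K ↥(K ∙ u) + finrank K ↥(U ⊓ X) := finrank_add_le_finrank_add_finrank _ _
    _ = finrank K ↥(U ⊓ X) + 1 := by
      rw [finrank_span_singleton (ne_of_mem_of_not_mem X.zero_mem huX).symm, add_comm]

end Submodule

theorem dim_inter_eq_of_lines_meet_general
    {K V₀ : Type*} [Field K] [AddCommGroup V₀] [Module K V₀]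
    (U V W : Submodule K V₀)
    [FiniteDimensional K U] [FiniteDimensional K V]
    (a a' : ℕ)
    (hU : Module.finrank K U = a + 1)
    (hV : Module.finrank K V = a' + 1)
    (ha' : a' ≤ a)
    (hVne : V ≠ U ⊓ V) (hUVW : U ⊓ V = U ⊓ W)
    (p : V₀) (hpV : p ∉ V) (hpW : p ∉ W)
    (hline : ∀ q ∈ U, q ∉ V →
      ∃ x : V₀, x ≠ 0 ∧ x ∈ Submodule.span K ({p, q} : Set V₀) ∧ (x ∈ V ∨ x ∈ W)) :
    Module.finrank K ↥(U ⊓ V) = a := by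
  have hUV : ¬ U ≤ V := fun h => hVne <| by
    rw [eq_of_le_of_finrank_le h (by omega), inf_idem]
  have hcover : (U : Set V₀) ⊆ (V ⊔ K ∙ p : Submodule K V₀) ∪ (W ⊔ K ∙ p : Submodule K V₀) := by
    intro q hq
    by_cases hqV : q ∈ V
    · exact Or.inl (mem_sup_left hqV)
    obtain ⟨x, hx0, hx, hxV | hxW⟩ := hline q hq hqV
    · exact Or.inl (mem_sup_span_singleton_of_mem_span_pair hx0 hx hxV hpV)
    · exact Or.inr (mem_sup_span_singleton_of_mem_span_pair hx0 hx hxW hpW)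
  have hlt : finrank K ↥(U ⊓ V) < finrank K U := finrank_lt_finrank_of_lt (inf_lt_left.2 hUV)
  rcases AddSubgroupClass.subset_union.1 hcover with hUle | hUle
  · have := finrank_le_finrank_inf_add_one hUle
    omega
  · have := finrank_le_finrank_inf_add_one hUle
    rw [← hUVW] at this
    omega

/-- Projective geometry formulated linearly: subspaces of a projective space `PG(V₀)` are
linear subspaces of `V₀`, the projective dimension of a subspace is its linear dimension
minus one, points are (spanned by) nonzero vectors, and the line `pq` is (the projectivization
of) `span {p, q}`.

Let `U, V, W` be subspaces of projective dimensions `a, a', a''` with `a ≥ max{a', a'', 0}`,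
such that `V ≠ U ∩ V = U ∩ W ≠ W`. Let `p` be a point not in `U ∪ V ∪ W`. If for every point
`q ∈ U \ V` the line `pq` meets `V ∪ W`, then `dim (U ∩ V) = a - 1` (i.e. the linear
dimension of `U ⊓ V` is `a`). -/
theorem dim_inter_eq_of_lines_meet
    {K V₀ : Type*} [Field K] [AddCommGroup V₀] [Module K V₀]
    (U V W : Submodule K V₀)
    [FiniteDimensional K U] [FiniteDimensional K V] [FiniteDimensional K W]
    (a a' a'' : ℕ)
    (hU : Module.finrank K U = a + 1)
    (hV : Module.finrank K V = a' + 1)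
    (hW : Module.finrank K W = a'' + 1)
    (ha' : a' ≤ a) (ha'' : a'' ≤ a)
    (hVne : V ≠ U ⊓ V) (hUVW : U ⊓ V = U ⊓ W) (hWne : U ⊓ W ≠ W)
    (p : V₀) (hpU : p ∉ U) (hpV : p ∉ V) (hpW : p ∉ W)
    (hline : ∀ q ∈ U, q ∉ V →
      ∃ x : V₀, x ≠ 0 ∧ x ∈ Submodule.span K ({p, q} : Set V₀) ∧ (x ∈ V ∨ x ∈ W)) :
    Module.finrank K ↥(U ⊓ V) = a :=
  dim_inter_eq_of_lines_meet_general U V W a a' hU hV ha' hVne hUVW p hpV hpW hline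
end

section
/- In a generalized quadrangle, let L₁ and L₂ be two opposite (disjoint, non-concurrent) lines and suppose L, L' are two further lines, each of which together with L₁, L₂ has the property that every line meeting two of {L₁, L₂, L} (resp. {L₁, L₂, L'}) meets the third. Then L and L' are disjoint, and every line meeting both L and L' also meets L₁ and L₂. -/
/-!
A generalized quadrangle has no triangles: if a point `p` lies on two lines both meeting a
line `m` not through `p`, the two meeting points are both collinear with `p`, so they coincide
by uniqueness of the projection of `p` onto `m`, and the two lines are equal.

Any line meeting `L₁` and `L` meets `L₂` (regulus condition for `L₁, L₂, L`), hence also `L'`.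
If `p` were on `L ∩ L'`, project each point `u` of `L₁` onto `L`; the resulting line through `u`
meets `L` and `L'`, so by the absence of triangles it passes through `p`. Thus `p` would be
collinear with all of `L₁`, contradicting that `L₁` and `L` are opposite. For a line `m` meeting
`L` at `a` and `L'`, the line through `a` meeting `L₁` also meets `L'`; since `a ∉ L'`, the
absence of triangles forces it to be `m`, and it meets `L₂` as well.
-/

/-- A generalized quadrangle: a point-line incidence geometry in which every line has at
least two points, two points lie on at most one common line, and for every point `p` and
line `l` with `p` not on `l` there is a unique point of `l` collinear with `p`. -/
structure GenQuadrangle (Pt Ln : Type*) where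
  incident : Pt → Ln → Prop
  line_nontrivial : ∀ l : Ln, ∃ p q : Pt, p ≠ q ∧ incident p l ∧ incident q l
  unique_line : ∀ p q : Pt, p ≠ q → ∀ l m : Ln,
    incident p l → incident q l → incident p m → incident q m → l = m
  proj : ∀ (p : Pt) (l : Ln), ¬ incident p l →
    ∃! q : Pt, incident q l ∧ ∃ m : Ln, incident p m ∧ incident q m

namespace GenQuadrangle

variable {Pt Ln : Type*} (Q : GenQuadrangle Pt Ln)

/-- Two points are collinear if they lie on a common line. -/
def Collinear (p q : Pt) : Prop := ∃ l : Ln, Q.incident p l ∧ Q.incident q l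

/-- A line `m` meets a line `l` if they have a common point. -/
def Meets (m l : Ln) : Prop := ∃ p : Pt, Q.incident p m ∧ Q.incident p l

/-- Two lines are opposite if they share no point and no point of either is collinear
with all points of the other. -/
def OppLines (l l' : Ln) : Prop :=
  (∀ p, Q.incident p l → ¬ Q.incident p l') ∧
  (∀ p, Q.incident p l → ¬ ∀ q, Q.incident q l' → Q.Collinear p q) ∧
  (∀ p, Q.incident p l' → ¬ ∀ q, Q.incident q l → Q.Collinear p q)

/-- The regulus condition for a triple of lines: every line meeting two of them meets
the third. -/
def Regulus3 (l₁ l₂ l₃ : Ln) : Prop :=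
  ∀ m : Ln, ((Q.Meets m l₁ ∧ Q.Meets m l₂) → Q.Meets m l₃) ∧
    ((Q.Meets m l₁ ∧ Q.Meets m l₃) → Q.Meets m l₂) ∧
    ((Q.Meets m l₂ ∧ Q.Meets m l₃) → Q.Meets m l₁)

end GenQuadrangle

namespace GenQuadrangle

variable {Pt Ln : Type*} (Q : GenQuadrangle Pt Ln) {l₁ l₂ l l' m : Ln}

theorem exists_meets_of_not_incident {p : Pt} (hp : ¬ Q.incident p l) :
    ∃ m, Q.incident p m ∧ Q.Meets m l := by
  obtain ⟨q, ⟨hql, m, hpm, hqm⟩, -⟩ := Q.proj p l hp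
  exact ⟨m, hpm, q, hqm, hql⟩

theorem eq_of_incident_of_meets {p : Pt} (hpm : ¬ Q.incident p m)
    (hpl : Q.incident p l) (hpl' : Q.incident p l') (hl : Q.Meets l m) (hl' : Q.Meets l' m) :
    l = l' := by
  obtain ⟨v, hvl, hvm⟩ := hl
  obtain ⟨w, hwl', hwm⟩ := hl'
  obtain ⟨_, -, huniq⟩ := Q.proj p m hpm
  have hvw : v = w := (huniq v ⟨hvm, l, hpl, hvl⟩).trans (huniq w ⟨hwm, l', hpl', hwl'⟩).symm
  have hpv : p ≠ v := by rintro rfl; exact hpm hvm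
  exact Q.unique_line p v hpv l l' hpl hvl hpl' (hvw ▸ hwl')

variable {Q}

theorem Meets.symm (h : Q.Meets m l) : Q.Meets l m :=
  let ⟨p, hpm, hpl⟩ := h
  ⟨p, hpl, hpm⟩

theorem Regulus3.meets_of_meets (h : Q.Regulus3 l₁ l₂ l) (h' : Q.Regulus3 l₁ l₂ l')
    (hm₁ : Q.Meets m l₁) (hm : Q.Meets m l) : Q.Meets m l₂ ∧ Q.Meets m l' := by
  have hm₂ : Q.Meets m l₂ := (h m).2.1 ⟨hm₁, hm⟩
  exact ⟨hm₂, (h' m).1 ⟨hm₁, hm₂⟩⟩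

section Regulus

variable (hopp : Q.OppLines l₁ l) (hne : l ≠ l')
  (h : Q.Regulus3 l₁ l₂ l) (h' : Q.Regulus3 l₁ l₂ l')
include hopp hne h h'

theorem Regulus3.not_incident_of_incident {p : Pt} (hpl : Q.incident p l) :
    ¬ Q.incident p l' := by
  intro hpl'
  refine hopp.2.2 p hpl fun u hu => ?_
  obtain ⟨n, hun, hnl⟩ := Q.exists_meets_of_not_incident (hopp.1 u hu)
  have hnl' : Q.Meets n l' := (h.meets_of_meets h' ⟨u, hun, hu⟩ hnl).2
  by_cases hpn : Q.incident p n
  · exact ⟨n, hpn, hun⟩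
  · exact absurd (Q.eq_of_incident_of_meets hpn hpl hpl' hnl.symm hnl'.symm) hne

theorem Regulus3.meets_of_meets_of_meets (hml : Q.Meets m l) (hml' : Q.Meets m l') :
    Q.Meets m l₁ ∧ Q.Meets m l₂ := by
  obtain ⟨a, ham, hal⟩ := hml
  have hal' : ¬ Q.incident a l' := h.not_incident_of_incident hopp hne h' hal
  obtain ⟨n, han, hn₁⟩ :=
    Q.exists_meets_of_not_incident fun ha₁ => hopp.1 a ha₁ hal
  obtain ⟨hn₂, hnl'⟩ := h.meets_of_meets h' hn₁ ⟨a, han, hal⟩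
  have hnm : n = m := Q.eq_of_incident_of_meets hal' han ham hnl' hml'
  exact hnm ▸ ⟨hn₁, hn₂⟩

end Regulus

end GenQuadrangle

theorem regulus_lines_disjoint_and_transversal_general {Pt Ln : Type*} (Q : GenQuadrangle Pt Ln)
    (L₁ L₂ L L' : Ln)
    (h1L : Q.OppLines L₁ L)
    (hLL' : L ≠ L')
    (hreg : Q.Regulus3 L₁ L₂ L) (hreg' : Q.Regulus3 L₁ L₂ L') :
    (∀ p : Pt, Q.incident p L → ¬ Q.incident p L') ∧
    (∀ m : Ln, Q.Meets m L → Q.Meets m L' → Q.Meets m L₁ ∧ Q.Meets m L₂) :=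
  ⟨fun _ => hreg.not_incident_of_incident h1L hLL' hreg',
    fun _ => hreg.meets_of_meets_of_meets h1L hLL' hreg'⟩

/-- In a generalized quadrangle, let `L₁, L₂` be two opposite lines and let `L, L'` be
two further lines, each opposite `L₁` and `L₂`, such that each of the triples
`{L₁, L₂, L}` and `{L₁, L₂, L'}` satisfies the regulus condition (every line meeting two
of the triple meets the third). Then `L` and `L'` are disjoint, and every line meeting
both `L` and `L'` also meets `L₁` and `L₂`. -/
theorem regulus_lines_disjoint_and_transversal {Pt Ln : Type*} (Q : GenQuadrangle Pt Ln)
    (L₁ L₂ L L' : Ln)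
    (h12 : Q.OppLines L₁ L₂)
    (h1L : Q.OppLines L₁ L) (h2L : Q.OppLines L₂ L)
    (h1L' : Q.OppLines L₁ L') (h2L' : Q.OppLines L₂ L')
    (hLL' : L ≠ L')
    (hreg : Q.Regulus3 L₁ L₂ L) (hreg' : Q.Regulus3 L₁ L₂ L') :
    (∀ p : Pt, Q.incident p L → ¬ Q.incident p L') ∧
    (∀ m : Ln, Q.Meets m L → Q.Meets m L' → Q.Meets m L₁ ∧ Q.Meets m L₂) :=
  regulus_lines_disjoint_and_transversal_general Q L₁ L₂ L L' h1L hLL' hreg hreg'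
end
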